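/- Let A, B, C, D, E, F be real m×m matrices with B, A symmetric (as blocks of a symmetric operator), and suppose the block matrix [[B, F, -Cᵀ, -Dᵀ], [-F, B, Dᵀ, -Cᵀ], [-C, D, A, E], [-D, -C, -E, A]] is symmetric and positive semi-definite. Then tr(AB) + tr(EF) ≥ tr(C²) + tr(D²). -/

import Mathlib

/-!
For `S = [[0, K], [-Kᵀ, 0]]` the congruent matrix `S M Sᵀ` is again positive semidefinite, and
the trace of a product of two positive semidefinite matrices is nonnegative. Writing
`M = [[P, Q], [Qᵀ, R]]`, this gives `tr (Q Kᵀ Q Kᵀ) ≤ tr (P K R Kᵀ)` for every `K`; the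
swap `K = [[0, 1], [1, 0]]` turns the two sides into `2 (tr C² + tr D²)` and `2 (tr AB + tr EF)`.
-/

open Matrix

namespace Matrix

variable {n p : Type*} [Fintype n] [Fintype p]

theorem trace_fromBlocks {R : Type*} [AddCommMonoid R] (A : Matrix n n R) (B : Matrix n p R)
    (C : Matrix p n R) (D : Matrix p p R) :
    (fromBlocks A B C D).trace = A.trace + D.trace := by
  simp [trace, Fintype.sum_sum_type]

open scoped ComplexOrder in
theorem PosSemidef.trace_mul_nonneg {𝕜 : Type*} [RCLike 𝕜] [DecidableEq n]
    {P N : Matrix n n 𝕜} (hP : P.PosSemidef) (hN : N.PosSemidef) : 0 ≤ (P * N).trace := by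
  obtain ⟨L, rfl⟩ : ∃ L : Matrix n n 𝕜, P = Lᴴ * L := by
    open scoped MatrixOrder Matrix.Norms.L2Operator in
    exact CStarAlgebra.nonneg_iff_eq_star_mul_self.mp hP.nonneg
  rw [Matrix.mul_assoc, trace_mul_comm]
  exact (hN.mul_mul_conjTranspose_same L).trace_nonneg

theorem trace_mul_transpose_sq_le_of_posSemidef_fromBlocks [DecidableEq n] [DecidableEq p]
    {P : Matrix n n ℝ} {Q : Matrix n p ℝ} {R : Matrix p p ℝ}
    (h : (fromBlocks P Q Qᵀ R).PosSemidef) (K : Matrix n p ℝ) :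
    (Q * Kᵀ * Q * Kᵀ).trace ≤ (P * K * R * Kᵀ).trace := by
  set S : Matrix (n ⊕ p) (n ⊕ p) ℝ := fromBlocks 0 K (-Kᵀ) 0
  have hS : (S * fromBlocks P Q Qᵀ R * Sᵀ).PosSemidef := by
    simpa using h.mul_mul_conjTranspose_same S
  have hPR : (R * Kᵀ * P * K).trace = (P * K * R * Kᵀ).trace := by
    rw [trace_mul_comm, ← Matrix.mul_assoc, ← Matrix.mul_assoc, trace_mul_comm]
    simp only [Matrix.mul_assoc]
  have hQQ : (Qᵀ * K * Qᵀ * K).trace = (Q * Kᵀ * Q * Kᵀ).trace := by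
    rw [← trace_transpose, trace_mul_comm]
    simp only [transpose_mul, transpose_transpose, Matrix.mul_assoc]
  have key : (fromBlocks P Q Qᵀ R * (S * fromBlocks P Q Qᵀ R * Sᵀ)).trace
      = 2 * (P * K * R * Kᵀ).trace - 2 * (Q * Kᵀ * Q * Kᵀ).trace := by
    simp only [S, fromBlocks_transpose, fromBlocks_multiply, trace_fromBlocks, Matrix.mul_zero,
      Matrix.zero_mul, Matrix.mul_neg, Matrix.neg_mul, add_zero, zero_add, transpose_neg,
      transpose_zero, transpose_transpose, trace_add, trace_neg, ← Matrix.mul_assoc, hPR, hQQ]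
    ring
  linarith [key ▸ h.trace_mul_nonneg hS]

end Matrix

theorem block_psd_trace_inequality {m : ℕ} (A B C D E F : Matrix (Fin m) (Fin m) ℝ)
    (M : Matrix ((Fin m ⊕ Fin m) ⊕ (Fin m ⊕ Fin m))
                ((Fin m ⊕ Fin m) ⊕ (Fin m ⊕ Fin m)) ℝ)
    (hM : M = Matrix.fromBlocks
      (Matrix.fromBlocks B F (-F) B)
      (Matrix.fromBlocks (-Cᵀ) (-Dᵀ) Dᵀ (-Cᵀ))
      (Matrix.fromBlocks (-C) D (-D) (-C))
      (Matrix.fromBlocks A E (-E) A))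
    (hpsd : M.PosSemidef) :
    Matrix.trace (C * C) + Matrix.trace (D * D)
      ≤ Matrix.trace (A * B) + Matrix.trace (E * F) := by
  set Q := fromBlocks (-Cᵀ) (-Dᵀ) Dᵀ (-Cᵀ)
  set K : Matrix (Fin m ⊕ Fin m) (Fin m ⊕ Fin m) ℝ := fromBlocks 0 1 1 0
  have hQ : fromBlocks (-C) D (-D) (-C) = Qᵀ := by simp [Q, fromBlocks_transpose]
  rw [hQ] at hM
  have key := trace_mul_transpose_sq_le_of_posSemidef_fromBlocks (hM ▸ hpsd) K
  have hQK : (Q * Kᵀ * Q * Kᵀ).trace = 2 * ((C * C).trace + (D * D).trace) := by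
    simp only [Q, K, fromBlocks_transpose, transpose_zero, transpose_one, fromBlocks_multiply,
      Matrix.mul_zero, Matrix.mul_one, zero_add, add_zero, Matrix.mul_neg, Matrix.neg_mul,
      ← transpose_mul, neg_neg, trace_fromBlocks, trace_add, trace_transpose]
    ring
  have hPK : (fromBlocks B F (-F) B * K * fromBlocks A E (-E) A * Kᵀ).trace
      = 2 * ((A * B).trace + (E * F).trace) := by
    simp only [K, fromBlocks_multiply, Matrix.mul_zero, Matrix.mul_one, zero_add, add_zero,
      Matrix.mul_neg, Matrix.neg_mul, neg_neg, fromBlocks_transpose, transpose_zero,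
      transpose_one, trace_fromBlocks, trace_add, trace_mul_comm F E, trace_mul_comm B A]
    ring
  linarith
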